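/- arXiv:2210.02722 — 2 statements merged into one kernel-verified Lean document; each statement's English description precedes it below -/
import Mathlib

section
/- Assume the strong Goldbach conjecture: every even integer greater than 2 is the sum of two primes (this guarantees τ(n) ≤ 3 for all positive integers n). Let a > 2 and let S = {a} ∪ {a + 1} ∪ {a + p : p prime}. Suppose there is no r with 1 ≤ r ≤ a−1 satisfying τ(r) = 3 and τ(a + r) ≥ 2, but there exists r with 1 ≤ r ≤ a−1 satisfying at least one of: (1) τ(r) = 3 and τ(a + r) = 1; (2) τ(r) = 2. Then g(S) = a + max{ r : 1 ≤ r ≤ a−1 and r satisfies condition (1) or (2) }. -/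
/-- `tau n` is the least `s` such that `n` is a sum of `s` terms, each a prime or `1`. -/
noncomputable def tau (n : ℕ) : ℕ :=
  sInf {s : ℕ | ∃ c : Fin s → ℕ, (∀ i, Nat.Prime (c i) ∨ c i = 1) ∧ ∑ i, c i = n}

/-!
Each generator of `S` is `a + c` with `c` a prime, `1` or `0`, so the monoid generated by `S`
consists exactly of the numbers `k * a + m` with `tau m ≤ k`. For `r < a` this makes `a + r`
representable iff `tau r ≤ 1`. From `2 * a` on everything is representable: Goldbach gives
`tau r ≤ 3`, and the one bad case `2 * a + r` with `tau r = 3` is rescued as `a + (a + r)`, since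
the hypothesis forces `tau (a + r) ≤ 1`. So the gaps above `a` are the `a + r` with `0 < r < a`
and `2 ≤ tau r`, and under the hypotheses these `r` are exactly the ones whose maximum is taken.
-/

variable {a k m m' n p q r s s' x : ℕ}

def IsSumOfPrimesOrOnes (s n : ℕ) : Prop :=
  ∃ c : Fin s → ℕ, (∀ i, Nat.Prime (c i) ∨ c i = 1) ∧ ∑ i, c i = n

namespace IsSumOfPrimesOrOnes

lemma zero : IsSumOfPrimesOrOnes 0 0 := ⟨Fin.elim0, fun i => i.elim0, rfl⟩

lemma self (n : ℕ) : IsSumOfPrimesOrOnes n n := ⟨fun _ => 1, fun _ => .inr rfl, by simp⟩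

lemma one_of_prime_or_eq_one (h : Nat.Prime p ∨ p = 1) : IsSumOfPrimesOrOnes 1 p :=
  ⟨fun _ => p, fun _ => h, by simp⟩

lemma add (h : IsSumOfPrimesOrOnes s m) (h' : IsSumOfPrimesOrOnes s' m') :
    IsSumOfPrimesOrOnes (s + s') (m + m') := by
  obtain ⟨c, hc, rfl⟩ := h
  obtain ⟨c', hc', rfl⟩ := h'
  refine ⟨Fin.append c c', Fin.addCases (by simpa using hc) (by simpa using hc'), ?_⟩
  simp [Fin.sum_univ_add]

end IsSumOfPrimesOrOnes

lemma isSumOfPrimesOrOnes_tau (n : ℕ) : IsSumOfPrimesOrOnes (tau n) n :=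
  Nat.sInf_mem (s := {s | IsSumOfPrimesOrOnes s n}) ⟨n, .self n⟩

lemma tau_le_of_isSumOfPrimesOrOnes (h : IsSumOfPrimesOrOnes s n) : tau n ≤ s :=
  Nat.sInf_le h

lemma tau_eq_zero_iff : tau n = 0 ↔ n = 0 := by
  refine ⟨fun h => ?_, fun h => h ▸ Nat.le_zero.mp
    (tau_le_of_isSumOfPrimesOrOnes IsSumOfPrimesOrOnes.zero)⟩
  have hn := isSumOfPrimesOrOnes_tau n
  rw [h] at hn
  obtain ⟨c, -, rfl⟩ := hn
  simp

@[simp] lemma tau_zero : tau 0 = 0 := tau_eq_zero_iff.mpr rfl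

lemma tau_le_one (h : Nat.Prime p ∨ p = 1) : tau p ≤ 1 :=
  tau_le_of_isSumOfPrimesOrOnes (.one_of_prime_or_eq_one h)

lemma tau_add_le (m n : ℕ) : tau (m + n) ≤ tau m + tau n :=
  tau_le_of_isSumOfPrimesOrOnes ((isSumOfPrimesOrOnes_tau m).add (isSumOfPrimesOrOnes_tau n))

lemma tau_le_three
    (goldbach : ∀ n : ℕ, Even n → 2 < n → ∃ p q : ℕ, Nat.Prime p ∧ Nat.Prime q ∧ n = p + q)
    (n : ℕ) : tau n ≤ 3 := by
  have tau_even : ∀ m, Even m → 2 < m → tau m ≤ 2 := fun m hm hm2 => by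
    obtain ⟨p, q, hp, hq, rfl⟩ := goldbach m hm hm2
    exact (tau_add_le p q).trans (add_le_add (tau_le_one (.inl hp)) (tau_le_one (.inl hq)))
  rcases lt_or_ge n 4 with hn | hn
  · interval_cases n
    · simp
    all_goals exact (tau_le_one (by norm_num)).trans (by norm_num)
  rcases Nat.even_or_odd n with he | ⟨k, rfl⟩
  · exact (tau_even n he (by omega)).trans (by norm_num)
  · calc tau (2 * k + 1) ≤ tau (2 * k) + tau 1 := tau_add_le _ _
      _ ≤ 2 + 1 := add_le_add (tau_even _ (even_two_mul k) (by omega)) (tau_le_one (.inr rfl))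

def primeTranslates (a : ℕ) : Set ℕ :=
  ({a} : Set ℕ) ∪ {a + 1} ∪ {n : ℕ | ∃ p : ℕ, Nat.Prime p ∧ n = a + p}

lemma self_mem_primeTranslates : a ∈ primeTranslates a := .inl (.inl rfl)

lemma add_mem_primeTranslates (h : Nat.Prime p ∨ p = 1) : a + p ∈ primeTranslates a := by
  rcases h with hp | rfl
  · exact .inr ⟨p, hp, rfl⟩
  · exact .inl (.inr rfl)

lemma mul_add_mem_closure_of_isSumOfPrimesOrOnes (h : IsSumOfPrimesOrOnes s m) :
    s * a + m ∈ AddSubmonoid.closure (primeTranslates a) := by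
  obtain ⟨c, hc, rfl⟩ := h
  have hsum : s * a + ∑ i, c i = ∑ i, (a + c i) := by simp [Finset.sum_add_distrib]
  rw [hsum]
  exact sum_mem fun i _ => AddSubmonoid.subset_closure (add_mem_primeTranslates (hc i))

lemma mul_add_mem_closure_of_tau_le (h : tau m ≤ k) :
    k * a + m ∈ AddSubmonoid.closure (primeTranslates a) := by
  have hsplit : k * a + m = (k - tau m) • a + (tau m * a + m) := by
    rw [smul_eq_mul, ← add_assoc, ← add_mul, Nat.sub_add_cancel h]
  rw [hsplit]
  exact add_mem (nsmul_mem (AddSubmonoid.subset_closure self_mem_primeTranslates) _)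
    (mul_add_mem_closure_of_isSumOfPrimesOrOnes (isSumOfPrimesOrOnes_tau m))

lemma mem_closure_primeTranslates_iff :
    x ∈ AddSubmonoid.closure (primeTranslates a) ↔ ∃ k m, x = k * a + m ∧ tau m ≤ k := by
  refine ⟨fun hx => ?_, fun ⟨k, m, hx, h⟩ => hx ▸ mul_add_mem_closure_of_tau_le h⟩
  induction hx using AddSubmonoid.closure_induction with
  | mem x hx =>
    rcases hx with (rfl | rfl) | ⟨p, hp, rfl⟩
    · exact ⟨1, 0, by simp, by simp⟩
    · exact ⟨1, 1, by simp, tau_le_one (.inr rfl)⟩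
    · exact ⟨1, p, by simp, tau_le_one (.inl hp)⟩
  | zero => exact ⟨0, 0, by simp, by simp⟩
  | add x y _ _ ihx ihy =>
    obtain ⟨k, m, rfl, h⟩ := ihx
    obtain ⟨k', m', rfl, h'⟩ := ihy
    exact ⟨k + k', m + m', by ring, (tau_add_le m m').trans (add_le_add h h')⟩

lemma add_mem_closure_primeTranslates_iff (hr : r < a) :
    a + r ∈ AddSubmonoid.closure (primeTranslates a) ↔ tau r ≤ 1 := by
  refine ⟨fun h => ?_, fun h => by simpa using mul_add_mem_closure_of_tau_le (a := a) h⟩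
  obtain ⟨k, m, hkm, htau⟩ := mem_closure_primeTranslates_iff.mp h
  obtain _ | _ | k := k
  · simp only [Nat.le_zero, tau_eq_zero_iff] at htau
    omega
  · obtain rfl : m = r := by omega
    exact htau
  · nlinarith

lemma mul_add_mem_closure_of_tau_le_three (hq : 2 ≤ q) (h3 : tau r ≤ 3)
    (hlift : tau r = 3 → tau (a + r) ≤ 1) :
    q * a + r ∈ AddSubmonoid.closure (primeTranslates a) := by
  rcases le_or_gt (tau r) q with hle | hlt
  · exact mul_add_mem_closure_of_tau_le hle
  · obtain rfl : q = 2 := by omega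
    have hrw : 2 * a + r = 1 * a + (a + r) := by ring
    exact hrw ▸ mul_add_mem_closure_of_tau_le (hlift (by omega))

theorem stmt8_general
    (goldbach : ∀ n : ℕ, Even n → 2 < n → ∃ p q : ℕ, Nat.Prime p ∧ Nat.Prime q ∧ n = p + q)
    (a : ℕ)
    (hno : ¬ ∃ r : ℕ, 1 ≤ r ∧ r ≤ a - 1 ∧ tau r = 3 ∧ 2 ≤ tau (a + r))
    (hex : ∃ r : ℕ, 1 ≤ r ∧ r ≤ a - 1 ∧ ((tau r = 3 ∧ tau (a + r) = 1) ∨ tau r = 2)) :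
    IsGreatest
      {n : ℕ | n ∉ AddSubmonoid.closure
        (({a} : Set ℕ) ∪ {a + 1} ∪ {n : ℕ | ∃ p : ℕ, Nat.Prime p ∧ n = a + p})}
      (a + sSup {r : ℕ | 1 ≤ r ∧ r ≤ a - 1 ∧
        ((tau r = 3 ∧ tau (a + r) = 1) ∨ tau r = 2)}) := by
  show IsGreatest {n | n ∉ AddSubmonoid.closure (primeTranslates a)} _
  set B := {r : ℕ | 1 ≤ r ∧ r ≤ a - 1 ∧ ((tau r = 3 ∧ tau (a + r) = 1) ∨ tau r = 2)}
  have hBbdd : BddAbove B := ⟨a - 1, fun r hr => hr.2.1⟩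
  obtain ⟨hR1, hRa, hRtau⟩ : sSup B ∈ B := Nat.sSup_mem hex hBbdd
  have hlift : ∀ r < a, tau r = 3 → tau (a + r) ≤ 1 := fun r hr h3 => by
    have hr0 : r ≠ 0 := fun h => by simp [h] at h3
    exact Nat.le_of_lt_succ <| not_le.mp fun h => hno ⟨r, by omega, by omega, h3, h⟩
  have hB : ∀ r < a, 2 ≤ tau r → r ∈ B := fun r hr h2 => by
    have hr0 : r ≠ 0 := fun h => by simp [h] at h2
    have ha0 : tau (a + r) ≠ 0 := by rw [Ne, tau_eq_zero_iff]; omega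
    have h3 := tau_le_three goldbach r
    have hlift_r := hlift r hr
    exact ⟨by omega, by omega, by omega⟩
  refine ⟨fun h => ?_, fun n hn => ?_⟩
  · rw [add_mem_closure_primeTranslates_iff (by omega)] at h
    omega
  by_contra! hlt
  obtain ⟨q, r, hr, rfl⟩ : ∃ q r, r < a ∧ n = q * a + r :=
    ⟨n / a, n % a, Nat.mod_lt _ (by omega), by rw [mul_comm, Nat.div_add_mod]⟩
  obtain rfl | rfl | hq : q = 0 ∨ q = 1 ∨ 2 ≤ q := by omega
  · omega
  · rw [one_mul, Set.mem_ofPred_eq, add_mem_closure_primeTranslates_iff hr] at hn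
    have hrR := le_csSup hBbdd (hB r hr (by omega))
    omega
  · exact hn (mul_add_mem_closure_of_tau_le_three hq (tau_le_three goldbach r)
      (hlift r hr))

theorem stmt8
    (goldbach : ∀ n : ℕ, Even n → 2 < n → ∃ p q : ℕ, Nat.Prime p ∧ Nat.Prime q ∧ n = p + q)
    (a : ℕ) (ha : 2 < a)
    (hno : ¬ ∃ r : ℕ, 1 ≤ r ∧ r ≤ a - 1 ∧ tau r = 3 ∧ 2 ≤ tau (a + r))
    (hex : ∃ r : ℕ, 1 ≤ r ∧ r ≤ a - 1 ∧ ((tau r = 3 ∧ tau (a + r) = 1) ∨ tau r = 2)) :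
    IsGreatest
      {n : ℕ | n ∉ AddSubmonoid.closure
        (({a} : Set ℕ) ∪ {a + 1} ∪ {n : ℕ | ∃ p : ℕ, Nat.Prime p ∧ n = a + p})}
      (a + sSup {r : ℕ | 1 ≤ r ∧ r ≤ a - 1 ∧
        ((tau r = 3 ∧ tau (a + r) = 1) ∨ tau r = 2)}) :=
  stmt8_general goldbach a hno hex
end

section
/- Let k be a positive integer, let a ≥ 3k², and let S = {a} ∪ {a + i² : 1 ≤ i ≤ k}. Then for every 1 ≤ r ≤ a−1, N_r = ι_k(r)·a + r; that is, the minimum in the formula N_r = min over m ∈ ℕ of ( ι_k(ma + r)·a + (ma + r) ) is attained at m = 0. -/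
/-!
Every element of the monoid generated by `a` and the `a + i²` has the form `t * a + q` with
`ι_k(q) ≤ t`, and conversely. So `N_r = min (t * a + j * a + r)` over `j` and `t ≥ ι_k(j * a + r)`,
and it suffices that `ι_k(r) ≤ ι_k(j * a + r) + j`. For `j ≥ 1` this holds because each square
used is at most `k²`, so `ι_k(j * a + r) ≥ (j * a + r) / k² ≥ 3 * j + r / k²`, while Lagrange's
four-square theorem gives `ι_k(r) ≤ r / k² + 4`.
-/

/-- `Nr S a r` is the least element of the additive submonoid of `ℕ` generated by `S`
that is congruent to `r` modulo `a`. -/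
noncomputable def Nr (S : Set ℕ) (a r : ℕ) : ℕ :=
  sInf {n : ℕ | n ∈ AddSubmonoid.closure S ∧ n % a = r}

/-- `iotaK k n` is the least number of squares `i²` with `1 ≤ i ≤ k` needed to write `n`
as a sum of such squares (with `iotaK k 0 = 0`). -/
noncomputable def iotaK (k n : ℕ) : ℕ :=
  sInf {s : ℕ | ∃ x : Fin k → ℕ, ∑ i, x i * (i.1 + 1) ^ 2 = n ∧ ∑ i, x i = s}

section iotaK

variable {k : ℕ}

lemma iotaK_le_sum {n : ℕ} (x : Fin k → ℕ) (hx : ∑ i, x i * (i.1 + 1) ^ 2 = n) :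
    iotaK k n ≤ ∑ i, x i :=
  Nat.sInf_le ⟨x, hx, rfl⟩

lemma iotaK_mul_sq_le (i : Fin k) (c : ℕ) : iotaK k (c * (i.1 + 1) ^ 2) ≤ c := by
  simpa [Pi.single_apply] using iotaK_le_sum (Pi.single i c) (by simp [Pi.single_apply])

lemma iotaK_zero : iotaK k 0 = 0 := by
  simpa using iotaK_le_sum (0 : Fin k → ℕ) (by simp)

lemma iotaK_sq_le_one {i : ℕ} (hi : i ≤ k) : iotaK k (i ^ 2) ≤ 1 := by
  rcases i.eq_zero_or_pos with rfl | hi0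
  · simp [iotaK_zero]
  · simpa [Nat.sub_add_cancel hi0] using iotaK_mul_sq_le (⟨i - 1, by omega⟩ : Fin k) 1

lemma exists_sum_eq_iotaK (hk : 0 < k) (n : ℕ) :
    ∃ x : Fin k → ℕ, ∑ i, x i * (i.1 + 1) ^ 2 = n ∧ ∑ i, x i = iotaK k n :=
  Nat.sInf_mem (s := {s | ∃ x : Fin k → ℕ, ∑ i, x i * (i.1 + 1) ^ 2 = n ∧ ∑ i, x i = s})
    ⟨n, Pi.single ⟨0, hk⟩ n, by simp [Pi.single_apply], by simp⟩

lemma iotaK_add_le (hk : 0 < k) (m n : ℕ) : iotaK k (m + n) ≤ iotaK k m + iotaK k n := by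
  obtain ⟨x, hxm, hx⟩ := exists_sum_eq_iotaK hk m
  obtain ⟨y, hyn, hy⟩ := exists_sum_eq_iotaK hk n
  simpa [add_mul, Finset.sum_add_distrib, hx, hy] using
    iotaK_le_sum (x + y) (by simp [add_mul, Finset.sum_add_distrib, hxm, hyn])

lemma le_iotaK_mul_sq (hk : 0 < k) (n : ℕ) : n ≤ iotaK k n * k ^ 2 := by
  obtain ⟨x, hxn, hx⟩ := exists_sum_eq_iotaK hk n
  calc n = ∑ i, x i * (i.1 + 1) ^ 2 := hxn.symm
    _ ≤ ∑ i, x i * k ^ 2 := by gcongr with i; exact i.2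
    _ = iotaK k n * k ^ 2 := by rw [← Finset.sum_mul, hx]

lemma iotaK_le_four (hk : 0 < k) {n : ℕ} (hn : n ≤ k ^ 2) : iotaK k n ≤ 4 := by
  obtain ⟨b, c, d, e, rfl⟩ := Nat.sum_four_squares n
  have := iotaK_add_le hk (b ^ 2 + c ^ 2 + d ^ 2) (e ^ 2)
  have := iotaK_add_le hk (b ^ 2 + c ^ 2) (d ^ 2)
  have := iotaK_add_le hk (b ^ 2) (c ^ 2)
  have := iotaK_sq_le_one (k := k) (i := b) (by nlinarith)
  have := iotaK_sq_le_one (k := k) (i := c) (by nlinarith)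
  have := iotaK_sq_le_one (k := k) (i := d) (by nlinarith)
  have := iotaK_sq_le_one (k := k) (i := e) (by nlinarith)
  omega

lemma iotaK_le_div_add_four (hk : 0 < k) (n : ℕ) : iotaK k n ≤ n / k ^ 2 + 4 := by
  have hmul := iotaK_mul_sq_le (⟨k - 1, by omega⟩ : Fin k) (n / k ^ 2)
  have hmod := iotaK_le_four hk (Nat.mod_lt n (by positivity : 0 < k ^ 2)).le
  have := iotaK_add_le hk (n / k ^ 2 * k ^ 2) (n % k ^ 2)
  rw [Nat.div_add_mod'] at this
  simp only [Nat.sub_add_cancel hk] at hmul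
  omega

lemma iotaK_le_iotaK_mul_add (hk : 0 < k) {a : ℕ} (ha : 3 * k ^ 2 ≤ a) (j r : ℕ) :
    iotaK k r ≤ iotaK k (j * a + r) + j := by
  rcases j.eq_zero_or_pos with rfl | hj
  · simp
  have hlow : (3 * j + r / k ^ 2) * k ^ 2 ≤ iotaK k (j * a + r) * k ^ 2 := by
    nlinarith [le_iotaK_mul_sq hk (j * a + r), Nat.div_mul_le_self r (k ^ 2)]
  have := Nat.le_of_mul_le_mul_right hlow (by positivity)
  have := iotaK_le_div_add_four hk r
  omega

end iotaK

def shiftedSquares (k a : ℕ) : Set ℕ :=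
  ({a} : Set ℕ) ∪ {n : ℕ | ∃ i : ℕ, 1 ≤ i ∧ i ≤ k ∧ n = a + i ^ 2}

lemma mem_closure_shiftedSquares_iff {k : ℕ} (hk : 0 < k) (a n : ℕ) :
    n ∈ AddSubmonoid.closure (shiftedSquares k a) ↔ ∃ t q, n = t * a + q ∧ iotaK k q ≤ t := by
  constructor
  · intro hn
    induction hn using AddSubmonoid.closure_induction with
    | mem n hn =>
      rcases hn with rfl | ⟨i, -, hik, rfl⟩
      · exact ⟨1, 0, by simp, by simp [iotaK_zero]⟩
      · exact ⟨1, i ^ 2, by simp, iotaK_sq_le_one hik⟩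
    | zero => exact ⟨0, 0, by simp, by simp [iotaK_zero]⟩
    | add m n _ _ hm hn =>
      obtain ⟨t, q, rfl, hq⟩ := hm
      obtain ⟨t', q', rfl, hq'⟩ := hn
      exact ⟨t + t', q + q', by ring, (iotaK_add_le hk q q').trans (by omega)⟩
  · rintro ⟨t, q, rfl, hq⟩
    obtain ⟨x, hxq, hx⟩ := exists_sum_eq_iotaK hk q
    obtain ⟨u, rfl⟩ := Nat.exists_eq_add_of_le hq
    have hsplit : (iotaK k q + u) * a + q = u • a + ∑ i, x i • (a + (i.1 + 1) ^ 2) := by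
      simp only [smul_eq_mul, mul_add, Finset.sum_add_distrib, ← Finset.sum_mul, hx, hxq]
      ring
    have hgen_a : a ∈ AddSubmonoid.closure (shiftedSquares k a) :=
      AddSubmonoid.subset_closure (Or.inl rfl)
    have hgen_sq (i : Fin k) : a + (i.1 + 1) ^ 2 ∈ AddSubmonoid.closure (shiftedSquares k a) :=
      AddSubmonoid.subset_closure (Or.inr ⟨i.1 + 1, by omega, i.2, rfl⟩)
    rw [hsplit]
    exact add_mem (nsmul_mem hgen_a u) (sum_mem fun i _ => nsmul_mem (hgen_sq i) (x i))

variable {k a r : ℕ}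

lemma Nr_shiftedSquares (hk : 0 < k) (ha : 3 * k ^ 2 ≤ a) (hr : r < a) :
    Nr (shiftedSquares k a) a r = iotaK k r * a + r := by
  refine IsLeast.csInf_eq ⟨⟨?_, Nat.mul_add_mod_of_lt hr⟩, ?_⟩
  · exact (mem_closure_shiftedSquares_iff hk a _).2 ⟨_, r, rfl, le_rfl⟩
  rintro n ⟨hn, hnr⟩
  obtain ⟨t, q, rfl, hq⟩ := (mem_closure_shiftedSquares_iff hk a _).1 hn
  have hqr : q = q / a * a + r := by
    rw [Nat.mul_add_mod_self_right] at hnr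
    rw [← hnr, Nat.div_add_mod']
  have := iotaK_le_iotaK_mul_add hk ha (q / a) r
  rw [← hqr] at this
  nlinarith

lemma isLeast_range_iotaK_mul_add (hk : 0 < k) (ha : 3 * k ^ 2 ≤ a) :
    IsLeast (Set.range fun m : ℕ => iotaK k (m * a + r) * a + (m * a + r)) (iotaK k r * a + r) := by
  refine ⟨⟨0, by simp⟩, ?_⟩
  rintro _ ⟨m, rfl⟩
  have := iotaK_le_iotaK_mul_add hk ha m r
  dsimp only
  nlinarith

theorem stmt14 (k a : ℕ) (hk : 0 < k) (ha : 3 * k ^ 2 ≤ a) :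
    ∀ r : ℕ, 1 ≤ r → r ≤ a - 1 →
      Nr (({a} : Set ℕ) ∪ {n : ℕ | ∃ i : ℕ, 1 ≤ i ∧ i ≤ k ∧ n = a + i ^ 2}) a r
          = iotaK k r * a + r ∧
      Nr (({a} : Set ℕ) ∪ {n : ℕ | ∃ i : ℕ, 1 ≤ i ∧ i ≤ k ∧ n = a + i ^ 2}) a r
          = sInf (Set.range fun m : ℕ => iotaK k (m * a + r) * a + (m * a + r)) := by
  intro r _ hr
  have hra : r < a := by
    have : 0 < k ^ 2 := by positivity
    omega
  have hN : Nr (shiftedSquares k a) a r = iotaK k r * a + r := Nr_shiftedSquares hk ha hra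
  exact ⟨hN, hN.trans (isLeast_range_iotaK_mul_add hk ha).csInf_eq.symm⟩
end
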